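/- arXiv:1708.01112 — 6 statements merged into one kernel-verified Lean document; each statement's English description precedes it below -/
import Mathlib

section
/- Let n ≥ 3 and let T be a subgroup of (ℤ/2)^n (viewed as n-tuples indexed by ℤ/n) such that |T| = 4, T is invariant under the cyclic shift of coordinates, and no nonidentity element t ∈ T has two cyclically consecutive coordinates both equal to 0. Then either 3 divides n and T consists of the zero tuple together with the three cyclic shifts of the pattern (0,1,1) repeated n/3 times, or 2 divides n and T consists of the zero tuple, the two alternating tuples (0,1,0,1,…) and (1,0,1,0,…), and the all-ones tuple. In particular gcd(n,6) ≠ 1. -/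
/-!
Write `σ` for the cyclic shift. It permutes the three nonzero elements of the Klein four-group
`T`, and a word fixed by `σ` is constant, so `σ` fixes at most one of them.

If `σ` fixes `a`, then for any other nonzero `b ∈ T` we get `σ b = a + b`, so `σ²` is the identity
on `T = {0, a, b, a + b}`: every word of `T` has period 2, and `n` is even since otherwise period 2
would make `b` constant.

Otherwise `σ` cycles `a, σ a, a + σ a`, so `σ³ = 1` and `1 + σ + σ² = 0` on `T`: every word of `T`
has period 3 and sums to 0 over a period, and `3 ∣ n` since otherwise `a` would be constant.

In both cases `T` lies in the explicit four-element set of such words, and equality follows by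
counting.
-/

open Function

namespace Function.Periodic

variable {n : ℕ} {α : Type*} {f : ZMod n → α}

lemma apply_natCast_val_mod [NeZero n] {m : ℕ} (h : Periodic f (m : ZMod n)) (j : ZMod n) :
    f ((j.val % m : ℕ) : ZMod n) = f j := by
  have hm : Periodic (f ∘ Nat.cast) m := fun k => by simpa using h k
  simpa using hm.map_mod_nat j.val

lemma apply_eq_apply_zero [NeZero n] (h : Periodic f 1) (j : ZMod n) : f j = f 0 := by
  simpa [Nat.mod_one] using (apply_natCast_val_mod (m := 1) (by simpa using h) j).symm

lemma one_of_coprime [NeZero n] {m : ℕ} (h : Periodic f (m : ZMod n)) (hm : m.Coprime n) :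
    Periodic f 1 := by
  simpa [mul_comm, ZMod.coe_mul_inv_eq_one m hm] using h.nat_mul ((m : ZMod n)⁻¹).val

end Function.Periodic

section CyclicShift

variable {n : ℕ} {α : Type*}

def cyclicShift [AddMonoid α] : AddMonoid.End (ZMod n → α) where
  toFun t i := t (i - 1)
  map_zero' := rfl
  map_add' _ _ := rfl

variable [AddMonoid α]

@[simp]
lemma cyclicShift_apply (t : ZMod n → α) (i : ZMod n) : cyclicShift t i = t (i - 1) := rfl

lemma cyclicShift_pow_apply (k : ℕ) (t : ZMod n → α) (i : ZMod n) :
    (cyclicShift ^ k) t i = t (i - k) := by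
  induction k generalizing i with
  | zero => simp
  | succ k ih =>
    rw [AddMonoid.End.coe_pow] at ih ⊢
    rw [iterate_succ_apply', cyclicShift_apply, ih]
    push_cast
    rw [sub_sub, add_comm]

lemma cyclicShift_pow_eq_self_iff (k : ℕ) (t : ZMod n → α) :
    (cyclicShift ^ k) t = t ↔ Periodic t (k : ZMod n) := by
  refine ⟨fun h x => ?_, fun h => funext fun i => ?_⟩
  · simpa [cyclicShift_pow_apply] using (congrFun h (x + k)).symm
  · simpa [cyclicShift_pow_apply] using (h (i - k)).symm

lemma cyclicShift_eq_self_iff (t : ZMod n → α) : cyclicShift t = t ↔ Periodic t 1 := by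
  simpa using cyclicShift_pow_eq_self_iff 1 t

lemma cyclicShift_injective : Injective (cyclicShift : AddMonoid.End (ZMod n → α)) :=
  fun u v h => funext fun i => by simpa using congrFun h (i + 1)

lemma cyclicShift_eq_self_of_not_dvd [NeZero n] {p : ℕ} (hp : p.Prime) (hpn : ¬p ∣ n)
    {t : ZMod n → α} (ht : (cyclicShift ^ p) t = t) : cyclicShift t = t :=
  (cyclicShift_eq_self_iff t).2 <|
    ((cyclicShift_pow_eq_self_iff p t).1 ht).one_of_coprime ((hp.coprime_iff_not_dvd).2 hpn)

end CyclicShift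

namespace Set

variable {α : Type*} {s : Set α}

lemma exists_mem_ne_ne_of_two_lt_ncard (hs : 2 < s.ncard) (x y : α) :
    ∃ b ∈ s, b ≠ x ∧ b ≠ y := by
  by_contra! h
  have hsub : s ⊆ {x, y} := fun b hb => by
    by_cases hbx : b = x
    · simp [hbx]
    · simp [h b hb hbx]
  have := (ncard_le_ncard hsub).trans (ncard_insert_le x {y})
  simp only [ncard_singleton] at this
  omega

lemma eq_of_subset_of_ncard_eq_four {a b c d : α} (hs : s.ncard = 4) (h : s ⊆ {a, b, c, d}) :
    s = {a, b, c, d} := by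
  classical
  refine eq_of_subset_of_ncard_le h ?_
  have := ncard_coe_finset ({a, b, c, d} : Finset α)
  push_cast at this
  rw [this, hs]
  exact Finset.card_le_four

end Set

lemma AddSubgroup.coe_eq_of_card_eq_four {G : Type*} [AddGroup G] {T : AddSubgroup G}
    (hT : Nat.card T = 4) {a b : G} (ha : a ∈ T) (hb : b ∈ T) (ha0 : a ≠ 0) (hb0 : b ≠ 0)
    (hab : a ≠ b) (hab0 : a + b ≠ 0) : (T : Set G) = {0, a, b, a + b} := by
  have hTn : (T : Set G).ncard = 4 := hT
  have haba : a + b ≠ a := fun h => hb0 (by simpa using h)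
  have habb : a + b ≠ b := fun h => ha0 (by simpa using h)
  have hsub : ({0, a, b, a + b} : Set G) ⊆ T := by
    rintro x (rfl | rfl | rfl | rfl)
    exacts [T.zero_mem, ha, hb, T.add_mem ha hb]
  have hcard : ({0, a, b, a + b} : Set G).ncard = 4 := by
    rw [Set.ncard_insert_of_notMem (by simp [ha0.symm, hb0.symm, hab0.symm]),
      Set.ncard_insert_of_notMem (by simp [hab, haba.symm]),
      Set.ncard_insert_of_notMem (by simp [habb.symm]), Set.ncard_singleton]
  exact (Set.eq_of_subset_of_ncard_le hsub (by rw [hTn, hcard])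
    (Set.finite_of_ncard_ne_zero (by rw [hTn]; norm_num))).symm

lemma AddMonoid.End.eq_of_mem_insert_add {G : Type*} [AddMonoid G]
    {f g : AddMonoid.End G} {a b t : G} (ht : t ∈ ({0, a, b, a + b} : Set G)) (ha : f a = g a)
    (hb : f b = g b) : f t = g t := by
  rcases ht with rfl | rfl | rfl | rfl <;> simp [ha, hb]

section Binary

variable {n : ℕ}

lemma ZMod.eq_zero_or_eq_one (x : ZMod 2) : x = 0 ∨ x = 1 := by
  revert x; decide

def periodTwoWords (n : ℕ) : Set (ZMod n → ZMod 2) :=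
  {0, fun j => if j.val % 2 = 0 then 0 else 1, fun j => if j.val % 2 = 0 then 1 else 0,
    fun _ => 1}

def periodThreeWords (n : ℕ) : Set (ZMod n → ZMod 2) :=
  {0, fun j => if j.val % 3 = 0 then 0 else 1, fun j => if j.val % 3 = 1 then 0 else 1,
    fun j => if j.val % 3 = 2 then 0 else 1}

lemma ite_mem_periodTwoWords (x y : ZMod 2) :
    (fun j : ZMod n => if j.val % 2 = 0 then x else y) ∈ periodTwoWords n := by
  rcases x.eq_zero_or_eq_one with rfl | rfl <;> rcases y.eq_zero_or_eq_one with rfl | rfl <;>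
    simp [periodTwoWords, Pi.zero_def]

lemma ite_mem_periodThreeWords (x y : ZMod 2) :
    (fun j : ZMod n => if j.val % 3 = 0 then x else if j.val % 3 = 1 then y else x + y) ∈
      periodThreeWords n := by
  simp only [periodThreeWords, Set.mem_insert_iff, Set.mem_singleton_iff]
  rcases x.eq_zero_or_eq_one with rfl | rfl <;> rcases y.eq_zero_or_eq_one with rfl | rfl
  · simp [Pi.zero_def]
  · right; left; funext j; split_ifs <;> simp_all
  · right; right; left; funext j; split_ifs <;> simp_all
  · right; right; right; funext j; split_ifs <;> simp_all [CharTwo.add_self_eq_zero]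
    omega

variable [NeZero n]

lemma mem_periodTwoWords_of_periodic {u : ZMod n → ZMod 2} (hu : Periodic u 2) :
    u ∈ periodTwoWords n := by
  have hform : u = fun j => if j.val % 2 = 0 then u 0 else u 1 := funext fun j => by
    rw [← (show Periodic u ((2 : ℕ) : ZMod n) by exact_mod_cast hu).apply_natCast_val_mod j]
    rcases Nat.mod_two_eq_zero_or_one j.val with h | h <;> simp [h]
  exact hform ▸ ite_mem_periodTwoWords _ _

lemma mem_periodThreeWords_of_periodic {u : ZMod n → ZMod 2} (hu : Periodic u 3)
    (hsum : u 0 + u 1 + u 2 = 0) : u ∈ periodThreeWords n := by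
  have h2 : u 2 = u 0 + u 1 := ((CharTwo.add_eq_iff_eq_add.1 hsum).trans (zero_add _)).symm
  have hform : u = fun j => if j.val % 3 = 0 then u 0 else if j.val % 3 = 1 then u 1 else
      u 0 + u 1 := funext fun j => by
    rw [← (show Periodic u ((3 : ℕ) : ZMod n) by exact_mod_cast hu).apply_natCast_val_mod j]
    obtain h | h | h : j.val % 3 = 0 ∨ j.val % 3 = 1 ∨ j.val % 3 = 2 := by omega
    all_goals simp [h, h2]
  exact hform ▸ ite_mem_periodThreeWords _ _

lemma eq_one_of_cyclicShift_eq_self {t : ZMod n → ZMod 2} (h : cyclicShift t = t)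
    (h0 : t ≠ 0) : t = 1 := by
  have hconst := ((cyclicShift_eq_self_iff t).1 h).apply_eq_apply_zero
  have ht0 : t 0 = 1 := (t 0).eq_zero_or_eq_one.resolve_left fun h' =>
    h0 (funext fun j => by rw [hconst j, h']; rfl)
  funext j
  rw [hconst j, ht0]
  rfl

end Binary

lemma CharTwo.add_ne_zero_of_ne {R : Type*} [Ring R] [CharP R 2] {a b : R} (hab : a ≠ b) :
    a + b ≠ 0 := fun h => hab (by rwa [← CharTwo.sub_eq_add, sub_eq_zero] at h)

section ShiftInvariantSubgroup

variable {n : ℕ} [NeZero n] {T : AddSubgroup (ZMod n → ZMod 2)}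

theorem two_dvd_and_coe_eq_periodTwoWords (hT : Nat.card T = 4)
    (hσ : ∀ t ∈ T, cyclicShift t ∈ T) {a : ZMod n → ZMod 2} (ha : a ∈ T) (ha0 : a ≠ 0)
    (hfix : cyclicShift a = a) : 2 ∣ n ∧ (T : Set (ZMod n → ZMod 2)) = periodTwoWords n := by
  have hTn : (T : Set (ZMod n → ZMod 2)).ncard = 4 := hT
  obtain ⟨b, hb, hb0, hba⟩ :=
    Set.exists_mem_ne_ne_of_two_lt_ncard (by rw [hTn]; norm_num) (0 : ZMod n → ZMod 2) a
  have hT' :=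
    T.coe_eq_of_card_eq_four hT ha hb ha0 hb0 hba.symm (CharTwo.add_ne_zero_of_ne hba.symm)
  have hσb : cyclicShift b = a + b := by
    rcases hT'.subset (hσ b hb) with h | h | h | h
    · exact absurd (cyclicShift_injective (h.trans (map_zero _).symm)) hb0
    · exact absurd (cyclicShift_injective (h.trans hfix.symm)) hba
    · exact absurd ((eq_one_of_cyclicShift_eq_self h hb0).trans
        (eq_one_of_cyclicShift_eq_self hfix ha0).symm) hba
    · exact h
  have hσ2 : ∀ t ∈ T, (cyclicShift ^ 2) t = t := fun t ht =>
    AddMonoid.End.eq_of_mem_insert_add (g := 1) (hT'.subset ht)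
      (by simp [pow_two, AddMonoid.End.coe_mul, hfix])
      (by simp [pow_two, AddMonoid.End.coe_mul, hσb, hfix, ← add_assoc, CharTwo.add_self_eq_zero])
  refine ⟨?_, Set.eq_of_subset_of_ncard_eq_four hTn fun t ht => mem_periodTwoWords_of_periodic
    (by simpa using (cyclicShift_pow_eq_self_iff 2 t).1 (hσ2 t ht))⟩
  by_contra h2
  have := cyclicShift_eq_self_of_not_dvd Nat.prime_two h2 (hσ2 b hb)
  exact ha0 (by simpa [hσb] using this)

theorem three_dvd_and_coe_eq_periodThreeWords (hT : Nat.card T = 4)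
    (hσ : ∀ t ∈ T, cyclicShift t ∈ T) (hfree : ∀ t ∈ T, t ≠ 0 → cyclicShift t ≠ t) :
    3 ∣ n ∧ (T : Set (ZMod n → ZMod 2)) = periodThreeWords n := by
  have hTn : (T : Set (ZMod n → ZMod 2)).ncard = 4 := hT
  obtain ⟨a, ha, ha0⟩ :=
    Set.exists_ne_of_one_lt_ncard (by rw [hTn]; norm_num) (0 : ZMod n → ZMod 2)
  set b := cyclicShift a with hb_def
  have hb : b ∈ T := hσ a ha
  have hb0 : b ≠ 0 := fun h => ha0 (cyclicShift_injective (h.trans (map_zero _).symm))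
  have hab : a ≠ b := fun h => hfree a ha ha0 h.symm
  have hT' := T.coe_eq_of_card_eq_four hT ha hb ha0 hb0 hab (CharTwo.add_ne_zero_of_ne hab)
  have hσb : cyclicShift b = a + b := by
    rcases hT'.subset (hσ b hb) with h | h | h | h
    · exact absurd (cyclicShift_injective (h.trans (map_zero _).symm)) hb0
    · refine absurd ?_ (hfree (a + b) (T.add_mem ha hb) (CharTwo.add_ne_zero_of_ne hab))
      rw [map_add, h, add_comm]
    · exact absurd h (hfree b hb hb0)
    · exact h
  have hσab : cyclicShift (a + b) = a := by
    rw [map_add, hσb, add_left_comm, CharTwo.add_self_eq_zero, add_zero]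
  have hσ3 : ∀ t ∈ T, (cyclicShift ^ 3) t = t := fun t ht =>
    AddMonoid.End.eq_of_mem_insert_add (g := 1) (hT'.subset ht)
      (by simp [pow_succ, AddMonoid.End.coe_mul, ← hb_def, hσb, hσab])
      (by simp [pow_succ, AddMonoid.End.coe_mul, ← hb_def, hσb, hσab])
  have hsum : ∀ t ∈ T, t + cyclicShift t + (cyclicShift ^ 2) t = 0 := fun t ht =>
    AddMonoid.End.eq_of_mem_insert_add (f := 1 + cyclicShift + cyclicShift ^ 2) (g := 0)
      (hT'.subset ht) (show a + b + cyclicShift b = 0 by rw [hσb]; grind)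
      (show b + cyclicShift b + cyclicShift (cyclicShift b) = 0 by rw [hσb, hσab]; grind)
  refine ⟨?_, Set.eq_of_subset_of_ncard_eq_four hTn fun t ht =>
    mem_periodThreeWords_of_periodic ?_ ?_⟩
  · by_contra h3
    exact hab (cyclicShift_eq_self_of_not_dvd Nat.prime_three h3 (hσ3 a ha)).symm
  · simpa using (cyclicShift_pow_eq_self_iff 3 t).1 (hσ3 t ht)
  · have h := congrFun (hsum t ht) 2
    simp only [Pi.add_apply, Pi.zero_apply, cyclicShift_apply, cyclicShift_pow_apply] at h
    norm_num at h
    linear_combination h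

end ShiftInvariantSubgroup

theorem stmt_0_general (n : ℕ) (hn : 3 ≤ n)
    (T : AddSubgroup (ZMod n → ZMod 2))
    (hcard : Nat.card T = 4)
    (hshift : ∀ t ∈ T, (fun i => t (i - 1)) ∈ T) :
    ((3 ∣ n ∧ (T : Set (ZMod n → ZMod 2)) =
        {0, fun j => if j.val % 3 = 0 then 0 else 1,
            fun j => if j.val % 3 = 1 then 0 else 1,
            fun j => if j.val % 3 = 2 then 0 else 1}) ∨
      (2 ∣ n ∧ (T : Set (ZMod n → ZMod 2)) =
        {0, fun j => if j.val % 2 = 0 then 0 else 1,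
            fun j => if j.val % 2 = 0 then 1 else 0,
            fun _ => 1})) ∧ Nat.gcd n 6 ≠ 1 := by
  have : NeZero n := ⟨by omega⟩
  have hσ : ∀ t ∈ T, cyclicShift t ∈ T := hshift
  by_cases hfix : ∃ a ∈ T, a ≠ 0 ∧ cyclicShift a = a
  · obtain ⟨a, ha, ha0, hfix⟩ := hfix
    obtain ⟨h2, hT⟩ := two_dvd_and_coe_eq_periodTwoWords hcard hσ ha ha0 hfix
    exact ⟨Or.inr ⟨h2, hT⟩, Nat.not_coprime_of_dvd_of_dvd (by norm_num) h2 (by norm_num)⟩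
  · push Not at hfix
    obtain ⟨h3, hT⟩ := three_dvd_and_coe_eq_periodThreeWords hcard hσ hfix
    exact ⟨Or.inl ⟨h3, hT⟩, Nat.not_coprime_of_dvd_of_dvd (by norm_num) h3 (by norm_num)⟩

theorem stmt_0 (n : ℕ) (hn : 3 ≤ n)
    (T : AddSubgroup (ZMod n → ZMod 2))
    (hcard : Nat.card T = 4)
    (hshift : ∀ t ∈ T, (fun i => t (i - 1)) ∈ T)
    (hzero : ∀ t ∈ T, t ≠ 0 → ∀ j : ZMod n, ¬(t j = 0 ∧ t (j + 1) = 0)) :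
    ((3 ∣ n ∧ (T : Set (ZMod n → ZMod 2)) =
        {0, fun j => if j.val % 3 = 0 then 0 else 1,
            fun j => if j.val % 3 = 1 then 0 else 1,
            fun j => if j.val % 3 = 2 then 0 else 1}) ∨
      (2 ∣ n ∧ (T : Set (ZMod n → ZMod 2)) =
        {0, fun j => if j.val % 2 = 0 then 0 else 1,
            fun j => if j.val % 2 = 0 then 1 else 0,
            fun _ => 1})) ∧ Nat.gcd n 6 ≠ 1 :=
  stmt_0_general n hn T hcard hshift
end

section
/- Let n ≥ 3 with 3 ∤ n, and let T be a subgroup of (ℤ/2)^n of order 4 that is invariant under the cyclic coordinate shift and such that no nonidentity element of T has two cyclically consecutive zero coordinates. Then n is even and T = {0, (0,1,0,1,…,0,1), (1,0,1,0,…,1,0), (1,1,…,1)}. -/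
/-! For nonzero `t ∈ T`, the shifts of `t` by `0, 1, 2, 3` are nonzero elements of `T`, which has
only three, so two of them coincide and `t` is periodic with a period dividing `6`; as `3` is a unit
mod `n`, `t` is `2`-periodic. A `2`-periodic function is determined by its values at `0` and `1`, so
`t ↦ (t 0, t 1)` is a bijection from `T` onto `(ℤ/2)²`. Some `t ∈ T` thus has `t 0 ≠ t 1`, which is
impossible for odd `n`, where `2` is a unit and `2`-periodic functions are constant. -/

open Function

namespace ZMod

variable {n : ℕ} {α : Type*} {f : ZMod n → α} {d : ZMod n}

theorem periodic_mul_left (h : Periodic f d) (k : ZMod n) : Periodic f (k * d) := by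
  simpa only [intCast_zmod_cast] using h.int_mul (cast k : ℤ)

theorem apply_eq_apply_of_periodic_of_isUnit (h : Periodic f d) (hd : IsUnit d) (x y : ZMod n) :
    f x = f y := by
  obtain ⟨u, rfl⟩ := hd
  simpa using periodic_mul_left h ((x - y) * ↑u⁻¹) y

theorem two_dvd_of_periodic_two (h : Periodic f 2) (h01 : f 0 ≠ f 1) : 2 ∣ n := by
  by_contra h2
  have hu : IsUnit (2 : ZMod n) := by
    simpa using (isUnit_prime_iff_not_dvd Nat.prime_two).mpr h2
  exact h01 (apply_eq_apply_of_periodic_of_isUnit h hu 0 1)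

theorem apply_eq_ite_of_periodic_two [NeZero n] (h : Periodic f 2) (j : ZMod n) :
    f j = if j.val % 2 = 0 then f 0 else f 1 := by
  have hj : f j = f ((j.val % 2 : ℕ) : ZMod n) := by
    conv_lhs => rw [← natCast_zmod_val j, ← Nat.mod_add_div' j.val 2]
    rw [Nat.cast_add, Nat.cast_mul, Nat.cast_ofNat, h.nat_mul]
  rcases Nat.mod_two_eq_zero_or_one j.val with h | h <;> simp [hj, h]

end ZMod

theorem fin_four_sub_dvd_six : ∀ a b : Fin 4, a ≠ b → ((b : ℕ) - (a : ℕ) : ℤ) ∣ 6 := by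
  decide

section CyclicShift

variable {n : ℕ} {M : Type*}

theorem shift_mem_of_shift_one_mem {S : Set (ZMod n → M)}
    (hS : ∀ t ∈ S, (fun i => t (i - 1)) ∈ S) {t : ZMod n → M} (ht : t ∈ S) (k : ℕ) :
    (fun i => t (i - k)) ∈ S := by
  induction k with
  | zero => simpa using ht
  | succ k ih => simpa [sub_sub, add_comm] using hS _ ih

theorem periodic_sub_of_shift_eq {t : ZMod n → M} {a b : ZMod n}
    (h : (fun i => t (i - a)) = fun i => t (i - b)) : Periodic t (b - a) := fun x => by
  simpa [add_sub_assoc] using congrFun h (x + b)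

variable [AddGroup M] {T : AddSubgroup (ZMod n → M)}

theorem exists_shift_eq_of_card_eq_four (hcard : Nat.card T = 4)
    (hshift : ∀ t ∈ T, (fun i => t (i - 1)) ∈ T) {t : ZMod n → M} (ht : t ∈ T) (ht0 : t ≠ 0) :
    ∃ a b : Fin 4, a ≠ b ∧ (fun i => t (i - (a : ℕ))) = fun i => t (i - (b : ℕ)) := by
  have : Finite T := Nat.finite_of_card_ne_zero (by omega)
  have hmaps : ∀ k ∈ (Set.univ : Set (Fin 4)),
      (fun i => t (i - (k : ℕ))) ∈ (T : Set (ZMod n → M)) \ {0} := by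
    refine fun k _ => ⟨shift_mem_of_shift_one_mem hshift ht k, fun h0 => ht0 ?_⟩
    funext i
    simpa using congrFun h0 (i + k)
  have hlt : ((T : Set (ZMod n → M)) \ {0}).ncard < (Set.univ : Set (Fin 4)).ncard := by
    rw [Set.ncard_sdiff_singleton_of_mem T.zero_mem, ← Nat.card_coe_set_eq, SetLike.coe_sort_coe,
      hcard, Set.ncard_univ, Nat.card_eq_fintype_card, Fintype.card_fin]
    norm_num
  obtain ⟨a, -, b, -, hab, heq⟩ :=
    Set.exists_ne_map_eq_of_ncard_lt_of_maps_to hlt hmaps ((Set.toFinite _).sdiff)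
  exact ⟨a, b, hab, heq⟩

theorem periodic_two_of_mem (h3 : ¬ 3 ∣ n) (hcard : Nat.card T = 4)
    (hshift : ∀ t ∈ T, (fun i => t (i - 1)) ∈ T) {t : ZMod n → M} (ht : t ∈ T) :
    Periodic t 2 := by
  by_cases ht0 : t = 0
  · subst ht0
    exact fun _ => rfl
  obtain ⟨a, b, hab, heq⟩ := exists_shift_eq_of_card_eq_four hcard hshift ht ht0
  obtain ⟨k, hk⟩ := fin_four_sub_dvd_six a b hab
  have h6 : Periodic t 6 := by
    have h6k : (6 : ZMod n) = k * ((b : ℕ) - (a : ℕ)) := by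
      simpa [mul_comm] using congrArg (Int.cast : ℤ → ZMod n) hk
    exact h6k ▸ (periodic_sub_of_shift_eq heq).int_mul k
  obtain ⟨u, hu⟩ : IsUnit (3 : ZMod n) := by
    simpa using (ZMod.isUnit_prime_iff_not_dvd Nat.prime_three).mpr h3
  have h62 : (6 : ZMod n) = u * 2 := by rw [hu]; norm_num
  simpa [h62] using ZMod.periodic_mul_left h6 ↑u⁻¹

end CyclicShift

section TwoPeriodic

variable {n : ℕ} [NeZero n] {M : Type*} [AddGroup M] {T : AddSubgroup (ZMod n → M)}

theorem exists_mem_apply_zero_apply_one [Finite M] (hper : ∀ t ∈ T, Periodic t 2)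
    (hcard : Nat.card T = Nat.card M ^ 2) (a b : M) : ∃ t ∈ T, t 0 = a ∧ t 1 = b := by
  have : Finite T := Nat.finite_of_card_ne_zero (by simp [hcard, Nat.card_pos.ne'])
  let ev : T → M × M := fun t => (t.1 0, t.1 1)
  have hinj : Injective ev := fun t s hts => by
    obtain ⟨h0, h1⟩ := Prod.mk.inj hts
    ext j
    rw [ZMod.apply_eq_ite_of_periodic_two (hper _ t.2),
      ZMod.apply_eq_ite_of_periodic_two (hper _ s.2), h0, h1]
  obtain ⟨t, ht⟩ := ((Nat.bijective_iff_injective_and_card ev).mpr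
    ⟨hinj, by rw [hcard, Nat.card_prod, sq]⟩).2 (a, b)
  exact ⟨t, t.2, (Prod.mk.inj ht).1, (Prod.mk.inj ht).2⟩

theorem coe_eq_range_ite (hper : ∀ t ∈ T, Periodic t 2)
    (hsurj : ∀ a b : M, ∃ t ∈ T, t 0 = a ∧ t 1 = b) :
    (T : Set (ZMod n → M)) =
      Set.range fun p : M × M => fun j => if j.val % 2 = 0 then p.1 else p.2 := by
  ext x
  constructor
  · exact fun hx => ⟨(x 0, x 1), (funext (ZMod.apply_eq_ite_of_periodic_two (hper x hx))).symm⟩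
  · rintro ⟨⟨a, b⟩, rfl⟩
    obtain ⟨t, ht, rfl, rfl⟩ := hsurj a b
    have ht_eq := funext (ZMod.apply_eq_ite_of_periodic_two (hper t ht))
    simp only [SetLike.mem_coe]
    rwa [← ht_eq]

end TwoPeriodic

theorem stmt_1_general (n : ℕ) (h3 : ¬ (3 ∣ n))
    (T : AddSubgroup (ZMod n → ZMod 2))
    (hcard : Nat.card T = 4)
    (hshift : ∀ t ∈ T, (fun i => t (i - 1)) ∈ T) :
    2 ∣ n ∧ (T : Set (ZMod n → ZMod 2)) =
      {0, fun j => if j.val % 2 = 0 then 0 else 1,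
          fun j => if j.val % 2 = 0 then 1 else 0,
          fun _ => 1} := by
  have : NeZero n := ⟨by rintro rfl; exact h3 (dvd_zero 3)⟩
  have hper : ∀ t ∈ T, Periodic t 2 := fun t => periodic_two_of_mem h3 hcard hshift
  have hsurj := exists_mem_apply_zero_apply_one hper (by simp [hcard])
  obtain ⟨t, ht, ht0, ht1⟩ := hsurj 0 1
  refine ⟨ZMod.two_dvd_of_periodic_two (hper t ht) (by simp [ht0, ht1]), ?_⟩
  rw [coe_eq_range_ite hper hsurj]
  ext x
  simp only [Set.mem_range, Prod.exists, Set.mem_insert_iff, Set.mem_singleton_iff]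
  constructor
  · rintro ⟨a, b, rfl⟩
    have zmod_two_cases : ∀ c : ZMod 2, c = 0 ∨ c = 1 := by decide
    rcases zmod_two_cases a with rfl | rfl <;> rcases zmod_two_cases b with rfl | rfl <;>
      simp [funext_iff]
  · rintro (rfl | rfl | rfl | rfl)
    exacts [⟨0, 0, funext fun _ => ite_self 0⟩, ⟨0, 1, rfl⟩, ⟨1, 0, rfl⟩,
      ⟨1, 1, funext fun _ => ite_self 1⟩]

theorem stmt_1 (n : ℕ) (hn : 3 ≤ n) (h3 : ¬ (3 ∣ n))
    (T : AddSubgroup (ZMod n → ZMod 2))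
    (hcard : Nat.card T = 4)
    (hshift : ∀ t ∈ T, (fun i => t (i - 1)) ∈ T)
    (hzero : ∀ t ∈ T, t ≠ 0 → ∀ j : ZMod n, ¬(t j = 0 ∧ t (j + 1) = 0)) :
    2 ∣ n ∧ (T : Set (ZMod n → ZMod 2)) =
      {0, fun j => if j.val % 2 = 0 then 0 else 1,
          fun j => if j.val % 2 = 0 then 1 else 0,
          fun _ => 1} :=
  stmt_1_general n h3 T hcard hshift
end

section
/- For n ≥ 3 with n ≠ 4, in the wreath graph C_n[2K_1] the 2-element sets B_i = {(i,0),(i,1)} (for i ∈ ℤ/n) are blocks of imprimitivity for the full automorphism group: every automorphism maps each B_i onto some B_j. -/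
/-! The blocks `B_i` are the classes of twins: vertices with the same neighbourhood share their
`ZMod n`-coordinate, because otherwise `{i + 1, i - 1} = {j + 1, j - 1}` with `i ≠ j` forces
`4 = 0` in `ZMod n`. Automorphisms preserve twins, and a pair of distinct twins is a whole block. -/

/-- The wreath graph `C_n[2K_1]`. -/
def wreath (n : ℕ) : SimpleGraph (ZMod n × Fin 2) where
  Adj u v := u ≠ v ∧ (v.1 = u.1 + 1 ∨ u.1 = v.1 + 1)
  symm := ⟨by rintro u v ⟨h1, h2⟩; exact ⟨h1.symm, h2.symm⟩⟩
  loopless := ⟨by rintro u ⟨h, _⟩; exact h rfl⟩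

namespace wreath

theorem adj_iff {n : ℕ} (hn : n ≠ 1) {u v : ZMod n × Fin 2} :
    (wreath n).Adj u v ↔ v.1 = u.1 + 1 ∨ v.1 = u.1 - 1 := by
  have h1 : (1 : ZMod n) ≠ 0 := mt ZMod.one_eq_zero_iff.mp hn
  have hne : v.1 = u.1 + 1 ∨ v.1 = u.1 - 1 → u ≠ v := by
    rintro (h | h) rfl
    · exact h1 (by linear_combination -h)
    · exact h1 (by linear_combination h)
  have hsub : u.1 = v.1 + 1 ↔ v.1 = u.1 - 1 :=
    ⟨fun h => by rw [h]; ring, fun h => by rw [h]; ring⟩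
  simp only [wreath, hsub]
  exact ⟨And.right, fun h => ⟨hne h, h⟩⟩

theorem neighborSet_eq_iff {n : ℕ} (hn : ¬ n ∣ 4) {u v : ZMod n × Fin 2} :
    (wreath n).neighborSet u = (wreath n).neighborSet v ↔ u.1 = v.1 := by
  have hn1 : n ≠ 1 := by rintro rfl; exact hn (one_dvd 4)
  have h4 : (4 : ZMod n) ≠ 0 := by exact_mod_cast mt (ZMod.natCast_eq_zero_iff 4 n).mp hn
  constructor
  · intro h
    have mem_of_mem (w : ZMod n × Fin 2) (hw : (wreath n).Adj u w) : (wreath n).Adj v w := by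
      rwa [← SimpleGraph.mem_neighborSet, ← h]
    have hplus := mem_of_mem (u.1 + 1, 0) ((adj_iff hn1).mpr (Or.inl rfl))
    have hminus := mem_of_mem (u.1 - 1, 0) ((adj_iff hn1).mpr (Or.inr rfl))
    simp only [adj_iff hn1] at hplus hminus
    rcases hplus with hp | hp
    · linear_combination hp
    rcases hminus with hm | hm
    · exact absurd (by linear_combination hp - hm) h4
    · linear_combination hm
  · intro h
    ext w
    simp only [SimpleGraph.mem_neighborSet, adj_iff hn1, h]

end wreath

theorem SimpleGraph.Iso.neighborSet_eq_of_neighborSet_eq {V W : Type*} {G : SimpleGraph V}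
    {H : SimpleGraph W} (φ : G ≃g H) {u v : V} (h : G.neighborSet u = G.neighborSet v) :
    H.neighborSet (φ u) = H.neighborSet (φ v) := by
  rw [← φ.image_neighborSet, ← φ.image_neighborSet, h]

theorem Prod.pair_eq_fst_fiber {α : Type*} {a b : α × Fin 2} (hfst : a.1 = b.1) (hne : a ≠ b) :
    ({a, b} : Set (α × Fin 2)) = {(a.1, 0), (a.1, 1)} := by
  obtain ⟨x, s⟩ := a
  obtain ⟨y, t⟩ := b
  obtain rfl : x = y := hfst
  have hst : s ≠ t := fun h => hne (h ▸ rfl)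
  fin_cases s <;> fin_cases t <;> simp_all [Set.pair_comm]

theorem stmt_9 (n : ℕ) (hn : 3 ≤ n) (hn4 : n ≠ 4)
    (φ : wreath n ≃g wreath n) (i : ZMod n) :
    ∃ j : ZMod n,
      (fun v => φ v) '' ({(i, 0), (i, 1)} : Set (ZMod n × Fin 2)) =
        ({(j, 0), (j, 1)} : Set (ZMod n × Fin 2)) := by
  have hdvd : ¬ n ∣ 4 := fun h => by
    have := Nat.le_of_dvd (by norm_num) h
    interval_cases n <;> simp_all
  have htwins : (wreath n).neighborSet (i, 0) = (wreath n).neighborSet (i, 1) :=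
    (wreath.neighborSet_eq_iff hdvd).mpr rfl
  have hfst : (φ (i, 0)).1 = (φ (i, 1)).1 :=
    (wreath.neighborSet_eq_iff hdvd).mp (φ.neighborSet_eq_of_neighborSet_eq htwins)
  have hne : φ (i, 0) ≠ φ (i, 1) := φ.injective.ne (by simp)
  exact ⟨_, (Set.image_pair _ _ _).trans (Prod.pair_eq_fst_fiber hfst hne)⟩
end

section
/- For n ≥ 3 with n ≠ 4, the automorphism group of the wreath graph C_n[2K_1] has order n · 2^{n+1}; it is generated by the rotation ρ: (i,s) ↦ (i+1,s), the reflection μ: (i,s) ↦ (−i,s), and the transposition σ_0 swapping (0,0) with (0,1) and fixing all other vertices, and the elementary abelian subgroup N generated by all coordinate-swaps σ_i is normal in it. -/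
/-- The full automorphism group of a simple graph, as a subgroup of `Equiv.Perm V`. -/
def autGroup {V : Type*} (Γ : SimpleGraph V) : Subgroup (Equiv.Perm V) where
  carrier := {g | ∀ u v, Γ.Adj u v ↔ Γ.Adj (g u) (g v)}
  one_mem' := by intro u v; rfl
  mul_mem' := by
    intro g h hg hh u v
    exact (hh u v).trans (hg (h u) (h v))
  inv_mem' := by
    intro g hg u v
    simpa using (hg (g⁻¹ u) (g⁻¹ v)).symm

/-- The rotation `ρ : (i,s) ↦ (i+1,s)`. -/
def wRho (n : ℕ) : Equiv.Perm (ZMod n × Fin 2) :=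
  Equiv.prodCongr (Equiv.addRight 1) (Equiv.refl _)

/-- The reflection `μ : (i,s) ↦ (-i,s)`. -/
def wMu (n : ℕ) : Equiv.Perm (ZMod n × Fin 2) :=
  Equiv.prodCongr (Equiv.neg (ZMod n)) (Equiv.refl _)

/-- The coordinate swap `σ_i`, interchanging `(i,0)` and `(i,1)` and fixing all
other vertices. -/
def sigmaSwap (n : ℕ) (i : ZMod n) : Equiv.Perm (ZMod n × Fin 2) :=
  Equiv.swap (i, 0) (i, 1)

/-!
Two vertices in the same fibre `{i} × Fin 2` have the same neighbourhood, and since `4 ≠ 0` in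
`ZMod n` no other pairs do. Hence every automorphism permutes the fibres, inducing an automorphism
`i ↦ ±i + c` of the cycle, and is then determined by which fibres it flips:
`Aut = {(i, s) ↦ (u i + c, s + t i)}`, of order `2 · n · 2^n`. The flips are generated by the
`σ_i = ρ^i σ_0 ρ^{-i}`, and conjugating `σ_i` by an automorphism swaps the image fibre.
-/

open Equiv

namespace ZMod

lemma exists_eq_units_mul_add_of_injective {n : ℕ} [NeZero n] (h2 : (2 : ZMod n) ≠ 0)
    {f : ZMod n → ZMod n} (hf : Function.Injective f)
    (hstep : ∀ i, f (i + 1) = f i + 1 ∨ f (i + 1) = f i - 1) :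
    ∃ u : ℤˣ, ∀ i, f i = (u : ℤ) * i + f 0 := by
  obtain ⟨u, hu⟩ : ∃ u : ℤˣ, f 1 = f 0 + (u : ℤ) := by
    rcases hstep 0 with h | h
    · exact ⟨1, by simpa using h⟩
    · exact ⟨-1, by simpa [sub_eq_add_neg] using h⟩
  -- Going back to `f k` at step `k + 1` would contradict injectivity, as `k + 2 ≠ k`.
  have hsucc : ∀ k : ℕ, f (k + 1) = f k + (u : ℤ) := by
    intro k
    induction k with
    | zero => simpa using hu
    | succ k ih =>
      push_cast
      have hback : f (k + 1 + 1) ≠ f k := fun h => h2 (by linear_combination hf h)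
      rcases Int.units_eq_one_or u with rfl | rfl <;> rcases hstep (k + 1) with h | h
      all_goals first
        | (push_cast at ih ⊢; linear_combination h)
        | (exfalso; apply hback; push_cast at ih; linear_combination h + ih)
  have hnat : ∀ k : ℕ, f k = (u : ℤ) * k + f 0 := by
    intro k
    induction k with
    | zero => simp
    | succ k ih => push_cast; rw [hsucc k, ih]; ring
  refine ⟨u, fun i => ?_⟩
  obtain ⟨k, rfl⟩ := ZMod.natCast_zmod_surjective i
  exact hnat k

end ZMod

namespace Wreath

variable {n : ℕ}

lemma adj_iff (h1 : (1 : ZMod n) ≠ 0) (u v : ZMod n × Fin 2) :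
    (wreath n).Adj u v ↔ (v.1 = u.1 + 1 ∨ u.1 = v.1 + 1) := by
  refine ⟨fun h => h.2, fun h => ⟨?_, h⟩⟩
  rintro rfl
  rcases h with h | h <;> exact h1 (by linear_combination -h)

def aut (u : ℤˣ) (c : ZMod n) (t : ZMod n → Fin 2) : Perm (ZMod n × Fin 2) :=
  Equiv.prodShear ((MulAction.toPerm u).trans (Equiv.addRight c)) fun i => Equiv.addRight (t i)

@[simp]
lemma aut_apply (u : ℤˣ) (c : ZMod n) (t : ZMod n → Fin 2) (p : ZMod n × Fin 2) :
    aut u c t p = (((u : ℤ) : ZMod n) * p.1 + c, p.2 + t p.1) := by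
  simp [aut, Units.smul_def, zsmul_eq_mul]

lemma aut_mem_autGroup (h1 : (1 : ZMod n) ≠ 0) (u : ℤˣ) (c : ZMod n) (t : ZMod n → Fin 2) :
    aut u c t ∈ autGroup (wreath n) := by
  intro p q
  rw [adj_iff h1, adj_iff h1, aut_apply, aut_apply]
  rcases Int.units_eq_one_or u with rfl | rfl <;> simp only [Units.val_one, Units.val_neg,
    Int.cast_one, Int.cast_neg, one_mul, neg_one_mul] <;> constructor <;> rintro (h | h)
  all_goals first
    | (left; linear_combination h) | (left; linear_combination -h)
    | (right; linear_combination h)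

lemma aut_injective (h2 : (2 : ZMod n) ≠ 0) :
    Function.Injective fun x : ℤˣ × ZMod n × (ZMod n → Fin 2) => aut x.1 x.2.1 x.2.2 := by
  rintro ⟨u, c, t⟩ ⟨u', c', t'⟩ h
  have happ : ∀ p, aut u c t p = aut u' c' t' p := fun p => DFunLike.congr_fun h p
  have hc : c = c' := (by simpa using happ (0, 0) : c = c' ∧ _).1
  have ht : t = t' := funext fun i => by simpa using congrArg Prod.snd (happ (i, 0))
  have hu : u = u' := by
    have h1 := congrArg Prod.fst (happ (1, 0))
    simp only [aut_apply, mul_one, hc, add_left_inj] at h1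
    rcases Int.units_eq_one_or u with rfl | rfl <;> rcases Int.units_eq_one_or u' with rfl | rfl
    all_goals first | rfl | (exfalso; apply h2; push_cast at h1; linear_combination h1)
                    | (exfalso; apply h2; push_cast at h1; linear_combination -h1)
  subst hc ht hu
  rfl

lemma fst_apply_eq_of_mem_autGroup (h4 : (4 : ZMod n) ≠ 0) {g : Perm (ZMod n × Fin 2)}
    (hg : g ∈ autGroup (wreath n)) {p q : ZMod n × Fin 2} (hpq : p.1 = q.1) :
    (g p).1 = (g q).1 := by
  have h1 : (1 : ZMod n) ≠ 0 := fun h => h4 (by linear_combination 4 * h)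
  -- `p` and `q` are twins, hence so are `g p` and `g q`.
  have twins : ∀ w, (wreath n).Adj (g p) w ↔ (wreath n).Adj (g q) w := by
    intro w
    obtain ⟨v, rfl⟩ := g.surjective w
    rw [← hg, ← hg, adj_iff h1, adj_iff h1, hpq]
  have hp := (twins ((g p).1 + 1, 0)).1 ((adj_iff h1 _ _).2 (Or.inl rfl))
  have hq := (twins ((g q).1 + 1, 0)).2 ((adj_iff h1 _ _).2 (Or.inl rfl))
  rw [adj_iff h1] at hp hq
  rcases hp with hp | hp
  · exact add_right_cancel hp
  rcases hq with hq | hq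
  · exact add_right_cancel hq.symm
  exact absurd (by linear_combination -hp - hq) h4

lemma exists_aut_eq_of_mem_autGroup [NeZero n] (h4 : (4 : ZMod n) ≠ 0)
    {g : Perm (ZMod n × Fin 2)} (hg : g ∈ autGroup (wreath n)) : ∃ u c t, g = aut u c t := by
  have h1 : (1 : ZMod n) ≠ 0 := fun h => h4 (by linear_combination 4 * h)
  have h2 : (2 : ZMod n) ≠ 0 := fun h => h4 (by linear_combination 2 * h)
  set f : ZMod n → ZMod n := fun i => (g (i, 0)).1
  have hfst : ∀ p, (g p).1 = f p.1 := fun p => fst_apply_eq_of_mem_autGroup h4 hg rfl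
  have hf : Function.Injective f := fun i j hij => by
    simpa using fst_apply_eq_of_mem_autGroup h4 (inv_mem hg) hij
  have hstep : ∀ i, f (i + 1) = f i + 1 ∨ f (i + 1) = f i - 1 := by
    intro i
    have hadj := (hg (i, 0) (i + 1, 0)).1 ((adj_iff h1 _ _).2 (Or.inl rfl))
    rw [adj_iff h1] at hadj
    exact hadj.imp id fun h => by linear_combination -h
  obtain ⟨u, hu⟩ := ZMod.exists_eq_units_mul_add_of_injective h2 hf hstep
  have hsnd : ∀ i, (g (i, 1)).2 = 1 + (g (i, 0)).2 := by
    intro i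
    have hne : (g (i, 1)).2 ≠ (g (i, 0)).2 := fun h =>
      absurd (g.injective (Prod.ext (hfst _) h)) (by simp)
    have fin_two : ∀ x y : Fin 2, x ≠ y → x = 1 + y := by decide
    exact fin_two _ _ hne
  refine ⟨u, f 0, fun i => (g (i, 0)).2, Equiv.ext fun ⟨i, s⟩ => Prod.ext ?_ ?_⟩
  · rw [hfst, aut_apply, hu]
  · fin_cases s
    · simp
    · simp [hsnd]

lemma aut_eq_mul (u : ℤˣ) (c : ZMod n) (t : ZMod n → Fin 2) :
    aut u c t = aut 1 c 0 * aut u 0 0 * aut 1 0 t := by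
  ext ⟨i, s⟩ <;> simp

lemma aut_one_zero_add (t t' : ZMod n → Fin 2) : aut 1 0 (t + t') = aut 1 0 t * aut 1 0 t' := by
  ext ⟨i, s⟩ <;> simp [add_assoc, add_comm (t' i)]

lemma aut_one_zero_zero : aut 1 0 0 = (1 : Perm (ZMod n × Fin 2)) := by
  ext ⟨i, s⟩ <;> simp

lemma aut_neg_one_zero_zero : aut (-1) 0 0 = wMu n := by
  ext ⟨i, s⟩ <;> simp [wMu]

lemma aut_one_natCast_zero (k : ℕ) : aut 1 (k : ZMod n) 0 = wRho n ^ k := by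
  induction k with
  | zero => simpa using aut_one_zero_zero
  | succ k ih =>
    rw [pow_succ', ← ih]
    ext ⟨i, s⟩ <;> simp [wRho, add_assoc]

lemma sigmaSwap_eq_aut (i : ZMod n) : sigmaSwap n i = aut 1 0 (Pi.single i 1) := by
  ext ⟨j, s⟩ <;> rcases eq_or_ne j i with rfl | hj <;> fin_cases s <;>
    simp [sigmaSwap, swap_apply_of_ne_of_ne, *]

lemma aut_one_zero_mem_closure_sigmaSwap [NeZero n] (t : ZMod n → Fin 2) :
    aut 1 0 t ∈ Subgroup.closure (Set.range (sigmaSwap n)) := by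
  rw [← Finset.univ_sum_single t]
  refine Finset.sum_induction _ (fun t => aut 1 0 t ∈ Subgroup.closure (Set.range (sigmaSwap n)))
    (fun t t' ht ht' => by rw [aut_one_zero_add]; exact mul_mem ht ht')
    (by rw [aut_one_zero_zero]; exact one_mem _) fun i _ => ?_
  obtain hi | hi : t i = 0 ∨ t i = 1 := by generalize t i = x; fin_cases x <;> simp
  · rw [hi, Pi.single_zero, aut_one_zero_zero]
    exact one_mem _
  · rw [hi, ← sigmaSwap_eq_aut]
    exact Subgroup.subset_closure ⟨i, rfl⟩

lemma sigmaSwap_eq_conj [NeZero n] (i : ZMod n) :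
    sigmaSwap n i = wRho n ^ i.val * sigmaSwap n 0 * (wRho n ^ i.val)⁻¹ := by
  rw [sigmaSwap, sigmaSwap, ← swap_apply_apply, ← aut_one_natCast_zero]
  simp

lemma autGroup_eq_closure [NeZero n] (h4 : (4 : ZMod n) ≠ 0) :
    autGroup (wreath n) = Subgroup.closure {wRho n, wMu n, sigmaSwap n 0} := by
  have h1 : (1 : ZMod n) ≠ 0 := fun h => h4 (by linear_combination 4 * h)
  set K := Subgroup.closure {wRho n, wMu n, sigmaSwap n 0}
  have hρ : wRho n ∈ K := Subgroup.subset_closure (by simp)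
  have hμ : wMu n ∈ K := Subgroup.subset_closure (by simp)
  have hσ : Subgroup.closure (Set.range (sigmaSwap n)) ≤ K := by
    rw [Subgroup.closure_le]
    rintro _ ⟨i, rfl⟩
    rw [sigmaSwap_eq_conj]
    exact mul_mem (mul_mem (pow_mem hρ _) (Subgroup.subset_closure (by simp)))
      (inv_mem (pow_mem hρ _))
  apply le_antisymm
  · intro g hg
    obtain ⟨u, c, t, rfl⟩ := exists_aut_eq_of_mem_autGroup h4 hg
    have hc : aut 1 c 0 ∈ K := by
      rw [← ZMod.natCast_zmod_val c, aut_one_natCast_zero]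
      exact pow_mem hρ _
    have hu : aut u 0 0 ∈ K := by
      rcases Int.units_eq_one_or u with rfl | rfl
      · rw [aut_one_zero_zero]; exact one_mem K
      · rwa [aut_neg_one_zero_zero]
    rw [aut_eq_mul]
    exact mul_mem (mul_mem hc hu) (hσ (aut_one_zero_mem_closure_sigmaSwap t))
  · rw [Subgroup.closure_le]
    rintro _ (rfl | rfl | rfl)
    · have := aut_mem_autGroup h1 1 ((1 : ℕ) : ZMod n) 0
      rwa [aut_one_natCast_zero, pow_one] at this
    · simpa [← aut_neg_one_zero_zero] using aut_mem_autGroup h1 (-1) 0 0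
    · simpa [← sigmaSwap_eq_aut] using aut_mem_autGroup h1 1 0 (Pi.single 0 1)

lemma card_autGroup [NeZero n] (h4 : (4 : ZMod n) ≠ 0) :
    Nat.card (autGroup (wreath n)) = n * 2 ^ (n + 1) := by
  have h1 : (1 : ZMod n) ≠ 0 := fun h => h4 (by linear_combination 4 * h)
  have h2 : (2 : ZMod n) ≠ 0 := fun h => h4 (by linear_combination 2 * h)
  have hrange : (autGroup (wreath n) : Set (Perm (ZMod n × Fin 2))) =
      Set.range fun x : ℤˣ × ZMod n × (ZMod n → Fin 2) => aut x.1 x.2.1 x.2.2 := by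
    ext g
    constructor
    · intro hg
      obtain ⟨u, c, t, rfl⟩ := exists_aut_eq_of_mem_autGroup h4 hg
      exact ⟨(u, c, t), rfl⟩
    · rintro ⟨⟨u, c, t⟩, rfl⟩
      exact aut_mem_autGroup h1 u c t
  rw [← SetLike.coe_sort_coe, hrange, Nat.card_range_of_injective (aut_injective h2)]
  simp [Nat.card_eq_fintype_card, Fintype.card_units_int]
  ring

lemma conj_sigmaSwap_of_mem_autGroup (h4 : (4 : ZMod n) ≠ 0) {g : Perm (ZMod n × Fin 2)}
    (hg : g ∈ autGroup (wreath n)) (i : ZMod n) :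
    g * sigmaSwap n i * g⁻¹ = sigmaSwap n (g (i, 0)).1 := by
  rw [sigmaSwap, ← swap_apply_apply]
  have hfst := fst_apply_eq_of_mem_autGroup h4 hg (p := (i, 1)) (q := (i, 0)) rfl
  have hne : (g (i, 1)).2 ≠ (g (i, 0)).2 := fun h =>
    absurd (g.injective (Prod.ext hfst h)) (by simp)
  generalize g (i, 0) = p, g (i, 1) = q at hfst hne ⊢
  obtain ⟨a, x⟩ := p
  obtain ⟨b, y⟩ := q
  dsimp only at hfst hne ⊢
  subst hfst
  fin_cases x <;> fin_cases y <;> simp_all [sigmaSwap, swap_comm]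

lemma conj_mem_closure_sigmaSwap (h4 : (4 : ZMod n) ≠ 0) {g : Perm (ZMod n × Fin 2)}
    (hg : g ∈ autGroup (wreath n)) {x : Perm (ZMod n × Fin 2)}
    (hx : x ∈ Subgroup.closure (Set.range (sigmaSwap n))) :
    g * x * g⁻¹ ∈ Subgroup.closure (Set.range (sigmaSwap n)) := by
  have hmap := Subgroup.mem_map_of_mem (MulAut.conj g).toMonoidHom hx
  rw [MonoidHom.map_closure] at hmap
  refine Subgroup.closure_mono ?_ hmap
  rintro _ ⟨_, ⟨i, rfl⟩, rfl⟩
  exact ⟨_, (conj_sigmaSwap_of_mem_autGroup h4 hg i).symm⟩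

lemma closure_sigmaSwap_le_autGroup (h1 : (1 : ZMod n) ≠ 0) :
    Subgroup.closure (Set.range (sigmaSwap n)) ≤ autGroup (wreath n) := by
  rw [Subgroup.closure_le]
  rintro _ ⟨i, rfl⟩
  rw [sigmaSwap_eq_aut]
  exact aut_mem_autGroup h1 _ _ _

end Wreath

open Wreath in
theorem stmt_10 (n : ℕ) (hn : 3 ≤ n) (hn4 : n ≠ 4) :
    Nat.card (autGroup (wreath n)) = n * 2 ^ (n + 1) ∧
    autGroup (wreath n) = Subgroup.closure {wRho n, wMu n, sigmaSwap n 0} ∧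
    Subgroup.closure (Set.range (sigmaSwap n)) ≤ autGroup (wreath n) ∧
    ∀ g ∈ autGroup (wreath n), ∀ x ∈ Subgroup.closure (Set.range (sigmaSwap n)),
      g * x * g⁻¹ ∈ Subgroup.closure (Set.range (sigmaSwap n)) := by
  have : NeZero n := ⟨by omega⟩
  have h4 : (4 : ZMod n) ≠ 0 := by
    rw [show (4 : ZMod n) = ((4 : ℕ) : ZMod n) by norm_cast, ne_eq, ZMod.natCast_eq_zero_iff]
    intro hdvd
    have := Nat.le_of_dvd four_pos hdvd
    interval_cases n <;> omega
  have h1 : (1 : ZMod n) ≠ 0 := fun h => h4 (by linear_combination 4 * h)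
  exact ⟨card_autGroup h4, autGroup_eq_closure h4, closure_sigmaSwap_le_autGroup h1,
    fun g hg x hx => conj_mem_closure_sigmaSwap h4 hg hx⟩
end

section
/- Let Γ be a finite connected 4-regular graph with a group G acting regularly on its arcs, and suppose the vertex stabilizers G_v are isomorphic to ℤ/2 × ℤ/2. Then for every G-consistent directed cycle C⃗ through a vertex v, there is an element of G_v mapping C⃗ to its reverse; that is, every G-consistent cycle is G-symmetric. -/
/-!
Let `g ∈ G` rotate the cycle, `g (c i) = c (i + 1)`, and let `h ∈ G_{c 0}` send the arc
`(c 0, c 1)` to `(c 0, c (-1))`. Since `G_{c 0} ≅ ℤ/2 × ℤ/2`, `h` is an involution. The element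
`h * g` reverses the arc `(c (-1), c 0)`, so its square fixes an arc and is trivial by freeness.
Hence `g * h * g = h`, i.e. `h` conjugates the rotation `g` to its inverse, and therefore
reflects the whole cycle: `h (c i) = c (-i)`.
-/

lemma mul_self_eq_one_of_mulEquiv_zmod_two_sq {H : Type*} [Group H]
    (φ : H ≃* Multiplicative (ZMod 2 × ZMod 2)) (x : H) : x * x = 1 :=
  φ.injective <| by
    rw [map_mul, map_one]
    generalize φ x = y
    revert y
    decide

lemma mul_self_eq_one_of_mem_of_apply_eq {V : Type*} {G : Subgroup (Equiv.Perm V)} {v : V}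
    (φ : MulAction.stabilizer G v ≃* Multiplicative (ZMod 2 × ZMod 2))
    {h : Equiv.Perm V} (hG : h ∈ G) (hv : h v = v) : h * h = 1 := by
  have hstab : (⟨h, hG⟩ : G) ∈ MulAction.stabilizer G v := hv
  simpa using congrArg (fun x : MulAction.stabilizer G v => ((x : G) : Equiv.Perm V))
    (mul_self_eq_one_of_mulEquiv_zmod_two_sq φ ⟨⟨h, hG⟩, hstab⟩)

lemma mul_self_eq_one_of_swaps_adj {V : Type*} {Γ : SimpleGraph V} {G : Subgroup (Equiv.Perm V)}
    (hfree : ∀ g ∈ G, ∀ u v : V, Γ.Adj u v → g u = u → g v = v → g = 1)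
    {s : Equiv.Perm V} (hs : s ∈ G) {u w : V} (huw : Γ.Adj u w) (hu : s u = w) (hw : s w = u) :
    s * s = 1 :=
  hfree _ (mul_mem hs hs) u w huw (by simp [hu, hw]) (by simp [hu, hw])

lemma apply_eq_neg_of_mul_mul_eq {V : Type*} {r : ℕ} {g h : Equiv.Perm V}
    (hgh : g * h * g = h) {c : ZMod r → V} (hg : ∀ i, g (c i) = c (i + 1))
    (h0 : h (c 0) = c 0) (i : ZMod r) : h (c i) = c (-i) := by
  have step : ∀ j : ZMod r, h (c (j + 1)) = c (-(j + 1)) ↔ h (c j) = c (-j) := fun j => by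
    have hj : h (c j) = g (h (c (j + 1))) := by
      rw [← hg, ← Equiv.Perm.mul_apply, ← Equiv.Perm.mul_apply, hgh]
    rw [hj, show -j = -(j + 1) + 1 by ring, ← hg (-(j + 1)), g.apply_eq_iff_eq]
  obtain ⟨n, rfl⟩ := ZMod.intCast_surjective i
  induction n using Int.induction_on with
  | zero => simpa using h0
  | succ n ih => simpa using (step n).2 (by simpa using ih)
  | pred n ih => exact (step _).1 (by simpa using ih)

theorem stmt_13_general {V : Type*} (Γ : SimpleGraph V)
    (G : Subgroup (Equiv.Perm V))
    (htrans : ∀ u v u' v' : V, Γ.Adj u v → Γ.Adj u' v' →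
      ∃ g ∈ G, g u = u' ∧ g v = v')
    (hfree : ∀ g ∈ G, ∀ u v : V, Γ.Adj u v → g u = u → g v = v → g = 1)
    (hstab : ∀ v : V,
      Nonempty (MulAction.stabilizer G v ≃* Multiplicative (ZMod 2 × ZMod 2)))
    (r : ℕ) (c : ZMod r → V)
    (hadj : ∀ i, Γ.Adj (c i) (c (i + 1)))
    (hcons : ∃ g ∈ G, ∀ i, g (c i) = c (i + 1)) :
    ∃ h ∈ G, h (c 0) = c 0 ∧ ∀ i, h (c i) = c (-i) := by
  obtain ⟨g, hgG, hg⟩ := hcons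
  have hadj₀ : Γ.Adj (c (-1)) (c 0) := by simpa using hadj (-1)
  obtain ⟨h, hhG, hh0, hh1⟩ :=
    htrans (c 0) (c 1) (c 0) (c (-1)) (by simpa using hadj 0) hadj₀.symm
  obtain ⟨φ⟩ := hstab (c 0)
  have hh_sq : h * h = 1 := mul_self_eq_one_of_mem_of_apply_eq φ hhG hh0
  have hhg_sq : (h * g) * (h * g) = 1 :=
    mul_self_eq_one_of_swaps_adj hfree (mul_mem hhG hgG) hadj₀
      (by simpa [hh0] using congrArg h (hg (-1))) (by simpa [hh1] using congrArg h (hg 0))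
  have hgh : g * h * g = h :=
    calc g * h * g = h * ((h * g) * (h * g)) := by simp only [← mul_assoc, hh_sq, one_mul]
      _ = h := by rw [hhg_sq, mul_one]
  exact ⟨h, hhG, hh0, apply_eq_neg_of_mul_mul_eq hgh hg hh0⟩

theorem stmt_13 {V : Type*} [Fintype V] (Γ : SimpleGraph V)
    (hconn : Γ.Connected)
    (hreg : ∀ v : V, Nat.card (Γ.neighborSet v) = 4)
    (G : Subgroup (Equiv.Perm V))
    (hG : ∀ g ∈ G, ∀ u v : V, Γ.Adj u v ↔ Γ.Adj (g u) (g v))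
    (htrans : ∀ u v u' v' : V, Γ.Adj u v → Γ.Adj u' v' →
      ∃ g ∈ G, g u = u' ∧ g v = v')
    (hfree : ∀ g ∈ G, ∀ u v : V, Γ.Adj u v → g u = u → g v = v → g = 1)
    (hstab : ∀ v : V,
      Nonempty (MulAction.stabilizer G v ≃* Multiplicative (ZMod 2 × ZMod 2)))
    (r : ℕ) (hr : 3 ≤ r) (c : ZMod r → V) (hinj : Function.Injective c)
    (hadj : ∀ i, Γ.Adj (c i) (c (i + 1)))
    (hcons : ∃ g ∈ G, ∀ i, g (c i) = c (i + 1)) :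
    ∃ h ∈ G, h (c 0) = c 0 ∧ ∀ i, h (c i) = c (-i) :=
  stmt_13_general Γ G htrans hfree hstab r c hadj hcons
end

section
/- Let Γ be a finite connected 4-regular graph with a group G acting regularly on its arcs, and suppose the vertex stabilizer of some vertex v is cyclic of order 4, generated by β. Let u be a neighbor of v. Then no element of G fixes v and swaps u with u·β; consequently there is a G-consistent directed cycle through (u, v, u·β) whose reverse lies in a different G-orbit (a G-chiral consistent cycle exists). -/
/-!
Since `G_v = ⟨β⟩` has order 4 and arc stabilizers are trivial, an element of `G` is determined by
its action on the arc `(v, u)`. An element fixing `v` and sending `u` to `β u` is therefore `β`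
itself, and if it also sends `β u` back to `u` then `β²` fixes `(v, u)`, so `β² = 1`: impossible.

For the cycle, take `g ∈ G` mapping the arc `(u, v)` to `(v, β u)`; the `g`-orbit of `u`, indexed
by `ZMod` of its length, is a `G`-consistent cycle through `(u, v, β u)` with shunt `g`. If some
`h ∈ G` reversed it, composing `h` with a suitable power of `g` would give a reflection of the
cycle fixing `v = c 1` and swapping `u = c 0` with `β u = c 2`, which we just excluded.
-/

open Function

theorem Nat.card_subtype_le_orderOf {M : Type*} [Group M] [Finite M] {p : M → Prop} {b : M}
    (hp : ∀ g, p g → ∃ k : ℕ, g = b ^ k) : Nat.card {g // p g} ≤ orderOf b := by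
  rw [← Nat.card_zpowers]
  refine Nat.card_le_card_of_injective
    (fun g => ⟨g.1, by obtain ⟨k, hk⟩ := hp g.1 g.2; exact hk ▸ Subgroup.npow_mem_zpowers b k⟩) ?_
  intro g g' h
  simpa [Subtype.ext_iff] using h

namespace Equiv.Perm

variable {α : Type*} (g : Perm α) (x : α)

instance minimalPeriod_neZero [Finite α] : NeZero (minimalPeriod g x) :=
  ⟨(minimalPeriod_pos_of_mem_periodicPts (g.injective.mem_periodicPts x)).ne'⟩

-- At a non-periodic point the index type is `ZMod 0 = ℤ`, hence `[Finite α]` below.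
noncomputable def orbitCycle (i : ZMod (minimalPeriod g x)) : α := (g ^ i.val) x

theorem orbitCycle_natCast (n : ℕ) : g.orbitCycle x n = (g ^ n) x := by
  rw [orbitCycle, ZMod.val_natCast, ← iterate_eq_pow, iterate_mod_minimalPeriod_eq,
    iterate_eq_pow]

variable [Finite α]

theorem orbitCycle_add_natCast (i : ZMod (minimalPeriod g x)) (n : ℕ) :
    g.orbitCycle x (i + n) = (g ^ n) (g.orbitCycle x i) := by
  rw [← ZMod.natCast_zmod_val i, ← Nat.cast_add, orbitCycle_natCast, ZMod.natCast_zmod_val,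
    orbitCycle, add_comm, pow_add, mul_apply]

theorem orbitCycle_add_one (i : ZMod (minimalPeriod g x)) :
    g.orbitCycle x (i + 1) = g (g.orbitCycle x i) := by
  simpa using g.orbitCycle_add_natCast x i 1

theorem orbitCycle_injective : Injective (g.orbitCycle x) := by
  intro i j hij
  apply ZMod.val_injective
  exact iterate_injOn_Iio_minimalPeriod (ZMod.val_lt i) (ZMod.val_lt j) hij

theorem three_le_minimalPeriod (h1 : g x ≠ x) (h2 : (g ^ 2) x ≠ x) : 3 ≤ minimalPeriod g x := by
  have hpos : 0 < minimalPeriod g x := Nat.pos_of_neZero _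
  have hper : (g ^ minimalPeriod g x) x = x := iterate_minimalPeriod
  by_contra! hlt
  interval_cases minimalPeriod g x
  · exact h1 hper
  · exact h2 hper

theorem orbitCycle_rel {R : α → α → Prop} (hR : ∀ a b, R a b → R (g a) (g b)) (hx : R x (g x))
    (i : ZMod (minimalPeriod g x)) : R (g.orbitCycle x i) (g.orbitCycle x (i + 1)) := by
  rw [orbitCycle_add_one, orbitCycle]
  induction i.val with
  | zero => exact hx
  | succ n ih => simpa [pow_succ'] using hR _ _ ih

theorem apply_orbitCycle_of_reverse {h : Perm α} {k : ZMod (minimalPeriod g x)}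
    (hk : ∀ i, h (g.orbitCycle x i) = g.orbitCycle x (k - i)) (m i : ZMod (minimalPeriod g x)) :
    (g ^ (m - k).val * h) (g.orbitCycle x i) = g.orbitCycle x (m - i) := by
  rw [mul_apply, hk, ← orbitCycle_add_natCast, ZMod.natCast_zmod_val]
  ring_nf

end Equiv.Perm

namespace SimpleGraph

variable {V : Type*} {Γ : SimpleGraph V} {G : Subgroup (Equiv.Perm V)}
  (hfree : ∀ g ∈ G, ∀ u v : V, Γ.Adj u v → g u = u → g v = v → g = 1)
include hfree

theorem eq_of_apply_eq_of_adj {g h : Equiv.Perm V} (hg : g ∈ G) (hh : h ∈ G) {u v : V}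
    (huv : Γ.Adj u v) (hu : g u = h u) (hv : g v = h v) : g = h :=
  (inv_mul_eq_one.mp (hfree _ (G.mul_mem (G.inv_mem hh) hg) u v huv
    (by simp [Equiv.Perm.mul_apply, hu]) (by simp [Equiv.Perm.mul_apply, hv]))).symm

variable {β : Equiv.Perm V} (hβG : β ∈ G) {u v : V} (hβv : β v = v) (hu : Γ.Adj v u)
include hβG hβv hu

theorem apply_ne_of_orderOf_ne_one (hβ : orderOf β ≠ 1) : β u ≠ u := fun h =>
  hβ (orderOf_eq_one_iff.mpr (eq_of_apply_eq_of_adj hfree hβG G.one_mem hu hβv h))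

theorem not_exists_swap_of_two_lt_orderOf (hβ : 2 < orderOf β) :
    ¬ ∃ g ∈ G, g v = v ∧ g u = β u ∧ g (β u) = u := by
  rintro ⟨g, hgG, hgv, hgu, hgβu⟩
  obtain rfl := eq_of_apply_eq_of_adj hfree hgG hβG hu (hgv.trans hβv.symm) hgu
  have hsq : g ^ 2 = 1 := eq_of_apply_eq_of_adj hfree (pow_mem hgG 2) G.one_mem hu
    (by simp [sq, hβv]) (by simpa [sq] using hgβu)
  exact (orderOf_le_of_pow_eq_one two_pos hsq).not_gt hβ

end SimpleGraph

theorem stmt_14_general {V : Type*} [Fintype V] (Γ : SimpleGraph V)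
    (G : Subgroup (Equiv.Perm V))
    (hG : ∀ g ∈ G, ∀ u v : V, Γ.Adj u v ↔ Γ.Adj (g u) (g v))
    (htrans : ∀ u v u' v' : V, Γ.Adj u v → Γ.Adj u' v' →
      ∃ g ∈ G, g u = u' ∧ g v = v')
    (hfree : ∀ g ∈ G, ∀ u v : V, Γ.Adj u v → g u = u → g v = v → g = 1)
    (v : V) (β : Equiv.Perm V) (hβG : β ∈ G) (hβv : β v = v)
    (hgen : ∀ g ∈ G, g v = v → ∃ k : ℕ, g = β ^ k)
    (hcard : Nat.card {g : G // (g : Equiv.Perm V) v = v} = 4)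
    (u : V) (hu : Γ.Adj v u) :
    (¬ ∃ g ∈ G, g v = v ∧ g u = β u ∧ g (β u) = u) ∧
    ∃ (r : ℕ) (_ : 3 ≤ r) (c : ZMod r → V), Function.Injective c ∧
      (∀ i, Γ.Adj (c i) (c (i + 1))) ∧
      c 0 = u ∧ c 1 = v ∧ c 2 = β u ∧
      (∃ g ∈ G, ∀ i, g (c i) = c (i + 1)) ∧
      ¬ ∃ h ∈ G, ∃ k : ZMod r, ∀ i, h (c i) = c (k - i) := by
  have hβ_order : 4 ≤ orderOf β := by
    have := Nat.card_subtype_le_orderOf (p := fun g : G => (g : Equiv.Perm V) v = v)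
      (b := ⟨β, hβG⟩) fun g hg => ?_
    · rwa [hcard, Subgroup.orderOf_mk] at this
    · obtain ⟨k, hk⟩ := hgen g g.2 hg
      exact ⟨k, Subtype.ext hk⟩
  have hβu : β u ≠ u := Γ.apply_ne_of_orderOf_ne_one hfree hβG hβv hu (by omega)
  have no_swap := Γ.not_exists_swap_of_two_lt_orderOf hfree hβG hβv hu (by omega)
  refine ⟨no_swap, ?_⟩
  have hvβu : Γ.Adj v (β u) := by simpa [hβv] using (hG β hβG v u).mp hu
  obtain ⟨g, hgG, hgu, hgv⟩ := htrans u v v (β u) hu.symm hvβu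
  have hg2u : (g ^ 2) u = β u := by rw [sq, Equiv.Perm.mul_apply, hgu, hgv]
  have hc0 : g.orbitCycle u 0 = u := by simpa using g.orbitCycle_natCast u 0
  have hc1 : g.orbitCycle u 1 = v := by simpa [hgu] using g.orbitCycle_natCast u 1
  have hc2 : g.orbitCycle u 2 = β u := by simpa [hg2u] using g.orbitCycle_natCast u 2
  refine ⟨_, g.three_le_minimalPeriod u (hgu ▸ hu.ne) (hg2u ▸ hβu), g.orbitCycle u,
    g.orbitCycle_injective u, g.orbitCycle_rel u (fun a b => (hG g hgG a b).mp) (hgu ▸ hu.symm),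
    hc0, hc1, hc2, ⟨g, hgG, fun i => (g.orbitCycle_add_one u i).symm⟩, ?_⟩
  rintro ⟨h, hhG, k, hk⟩
  have hflip := g.apply_orbitCycle_of_reverse u hk 2
  have h21 : (2 : ZMod (minimalPeriod g u)) - 1 = 1 := by ring
  exact no_swap ⟨_, G.mul_mem (pow_mem hgG _) hhG, by simpa [h21, hc1] using hflip 1,
    by simpa [hc0, hc2] using hflip 0, by simpa [hc0, hc2] using hflip 2⟩

theorem stmt_14 {V : Type*} [Fintype V] (Γ : SimpleGraph V)
    (hconn : Γ.Connected)
    (hreg : ∀ v : V, Nat.card (Γ.neighborSet v) = 4)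
    (G : Subgroup (Equiv.Perm V))
    (hG : ∀ g ∈ G, ∀ u v : V, Γ.Adj u v ↔ Γ.Adj (g u) (g v))
    (htrans : ∀ u v u' v' : V, Γ.Adj u v → Γ.Adj u' v' →
      ∃ g ∈ G, g u = u' ∧ g v = v')
    (hfree : ∀ g ∈ G, ∀ u v : V, Γ.Adj u v → g u = u → g v = v → g = 1)
    (v : V) (β : Equiv.Perm V) (hβG : β ∈ G) (hβv : β v = v)
    (hgen : ∀ g ∈ G, g v = v → ∃ k : ℕ, g = β ^ k)
    (hcard : Nat.card {g : G // (g : Equiv.Perm V) v = v} = 4)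
    (u : V) (hu : Γ.Adj v u) :
    (¬ ∃ g ∈ G, g v = v ∧ g u = β u ∧ g (β u) = u) ∧
    ∃ (r : ℕ) (_ : 3 ≤ r) (c : ZMod r → V), Function.Injective c ∧
      (∀ i, Γ.Adj (c i) (c (i + 1))) ∧
      c 0 = u ∧ c 1 = v ∧ c 2 = β u ∧
      (∃ g ∈ G, ∀ i, g (c i) = c (i + 1)) ∧
      ¬ ∃ h ∈ G, ∃ k : ZMod r, ∀ i, h (c i) = c (k - i) :=
  stmt_14_general Γ G hG htrans hfree v β hβG hβv hgen hcard u hu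
end
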